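/- arXiv:1807.01018 — 3 statements merged into one kernel-verified Lean document; each statement's English description precedes it below -/
import Mathlib

section
/- Let 1 < p ≤ q < ∞, 0 < α < N, and let ω, σ be positive measurable functions on ℝ^N. If the norm inequality ‖ω · I_α f‖_{L^q} ≤ C ‖f σ‖_{L^p} holds for all nonnegative f ∈ L^p(σ^p), where I_α f(x) = ∫ f(y)|x-y|^{α-N} dy, then the Muckenhoupt-type characteristic sup over cubes Q of |Q|^{α/N - (1/p - 1/q)} ( (1/|Q|) ∫_Q ω^q )^{1/q} ( (1/|Q|) ∫_Q σ^{-p/(p-1)} )^{(p-1)/p} is finite. -/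
/-!
Test the norm inequality against `f = 𝟙_Q σ^(-p')`, truncated at height `n` so that every
integral involved is finite. For `x, y ∈ Q` the kernel `‖x - y‖^(α - N)` is at least
`(√N h)^(α - N)`, so the left side is at least
`(∫_Q ω^q)^(1/q) (√N h)^(α - N) ∫_Q σ^(-p')`, while the right side is at most
`C (∫_Q σ^(-p'))^(1/p)`. Dividing, letting `n → ∞` by monotone convergence, and collecting the
powers of `|Q| = h^N` gives the characteristic bounded by `C √N^(N - α)`.
-/

open MeasureTheory ENNReal

namespace ENNReal

lemma mul_rpow_le_self_of_le_rpow_neg {a s : ℝ≥0∞} {p : ℝ} (hp : 1 < p) (hs₀ : s ≠ 0)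
    (hs : s ≠ ⊤) (ha : a ≤ s ^ (-(p / (p - 1)))) : (a * s) ^ p ≤ a := by
  have hp₁ : 0 < p - 1 := by linarith
  calc (a * s) ^ p = a * a ^ (p - 1) * s ^ p := by
        nth_rw 1 [mul_rpow_of_nonneg _ _ (by linarith), show p = 1 + (p - 1) by ring,
          rpow_add_of_nonneg _ _ zero_le_one hp₁.le, rpow_one]
    _ ≤ a * (s ^ (-(p / (p - 1)))) ^ (p - 1) * s ^ p := by gcongr
    _ = a := by
      rw [← rpow_mul, mul_assoc, ← rpow_add _ _ hs₀ hs,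
        show -(p / (p - 1)) * (p - 1) + p = 0 by field_simp; ring, rpow_zero, mul_one]

lemma mul_rpow_le_of_mul_le_mul_rpow {a C S : ℝ≥0∞} {p : ℝ} (hp : 0 < p) (hS₀ : S ≠ 0)
    (hS : S ≠ ⊤) (h : a * S ≤ C * S ^ (1 / p)) : a * S ^ ((p - 1) / p) ≤ C := by
  have hSp₀ : S ^ (1 / p) ≠ 0 := (rpow_pos (pos_iff_ne_zero.mpr hS₀) hS).ne'
  rw [← ENNReal.mul_le_mul_iff_left hSp₀ (rpow_ne_top_of_nonneg (by positivity) hS), mul_assoc,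
    ← rpow_add _ _ hS₀ hS, show (p - 1) / p + 1 / p = 1 by field_simp; ring, rpow_one]
  exact h

lemma iSup_rpow {ι : Type*} (f : ι → ℝ≥0∞) {r : ℝ} (hr : 0 < r) :
    (⨆ i, f i) ^ r = ⨆ i, f i ^ r :=
  (orderIsoRpow r hr).map_iSup f

lemma iSup_min_natCast (a : ℝ≥0∞) : ⨆ n : ℕ, min a n = a := by
  rw [← inf_iSup_eq, iSup_natCast, inf_top_eq]

lemma inv_mul_rpow_of_nonneg (V W : ℝ≥0∞) {r : ℝ} (hr : 0 ≤ r) :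
    (V⁻¹ * W) ^ r = V ^ (-r) * W ^ r := by
  rw [mul_rpow_of_nonneg _ _ hr, inv_rpow, rpow_neg]

end ENNReal

section NormInequality

variable {X : Type*} [MeasurableSpace X] {μ : Measure X} {Q : Set X}
  {K : X → X → ℝ≥0∞} {w v : X → ℝ≥0∞} {p q : ℝ} {C κ : ℝ≥0∞}

lemma lintegral_indicator_mul_rpow_le {u : X → ℝ≥0∞} (hp : 1 < p)
    (hQ : MeasurableSet Q) (hv₀ : ∀ x, v x ≠ 0) (hv : ∀ x, v x ≠ ⊤)
    (hu : ∀ x, u x ≤ v x ^ (-(p / (p - 1)))) :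
    ∫⁻ x, (Q.indicator u x * v x) ^ p ∂μ ≤ ∫⁻ x in Q, u x ∂μ := by
  have hp₀ : (0 : ℝ) < p := by linarith
  calc ∫⁻ x, (Q.indicator u x * v x) ^ p ∂μ = ∫⁻ x in Q, (u x * v x) ^ p ∂μ := by
        rw [← lintegral_indicator hQ]
        congr 1 with x
        by_cases hx : x ∈ Q <;> simp [hx, zero_rpow_of_pos hp₀]
    _ ≤ ∫⁻ x in Q, u x ∂μ :=
        lintegral_mono fun x => mul_rpow_le_self_of_le_rpow_neg hp (hv₀ x) (hv x) (hu x)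

lemma const_mul_setLIntegral_le_lintegral_indicator_mul {u k : X → ℝ≥0∞}
    (hQ : MeasurableSet Q) (hk : ∀ᵐ y ∂μ, y ∈ Q → κ ≤ k y) :
    κ * ∫⁻ y in Q, u y ∂μ ≤ ∫⁻ y, Q.indicator u y * k y ∂μ :=
  calc κ * ∫⁻ y in Q, u y ∂μ ≤ ∫⁻ y in Q, u y * κ ∂μ := by
        rw [mul_comm]; exact lintegral_mul_const_le _ _
    _ ≤ ∫⁻ y in Q, u y * k y ∂μ :=
        setLIntegral_mono_ae' hQ (hk.mono fun y hy hyQ => by gcongr; exact hy hyQ)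
    _ = ∫⁻ y, Q.indicator u y * k y ∂μ := by
        rw [← lintegral_indicator hQ]
        congr 1 with y
        by_cases hy : y ∈ Q <;> simp [hy]

lemma setLIntegral_rpow_one_div_mul_le {F : X → ℝ≥0∞} {B : ℝ≥0∞} (hq : 0 < q)
    (hQ : MeasurableSet Q) (hF : ∀ x ∈ Q, B ≤ F x) :
    (∫⁻ x in Q, w x ^ q ∂μ) ^ (1 / q) * B ≤ (∫⁻ x, (w x * F x) ^ q ∂μ) ^ (1 / q) := by
  have hB : B = (B ^ q) ^ (1 / q) := by rw [← rpow_mul, mul_one_div_cancel hq.ne', rpow_one]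
  rw [hB, ← mul_rpow_of_nonneg _ _ (by positivity)]
  gcongr
  calc (∫⁻ x in Q, w x ^ q ∂μ) * B ^ q ≤ ∫⁻ x in Q, w x ^ q * B ^ q ∂μ :=
        lintegral_mul_const_le _ _
    _ ≤ ∫⁻ x in Q, (w x * F x) ^ q ∂μ := by
        refine setLIntegral_mono' hQ fun x hx => ?_
        rw [mul_rpow_of_nonneg _ _ hq.le]
        gcongr
        exact hF x hx
    _ ≤ ∫⁻ x, (w x * F x) ^ q ∂μ := setLIntegral_le_lintegral _ _

lemma rpow_setLIntegral_mul_rpow_le_of_norm_ineq {u : X → ℝ≥0∞} (hp : 1 < p) (hq : 0 < q)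
    (hQ : MeasurableSet Q) (hv₀ : ∀ x, v x ≠ 0) (hv : ∀ x, v x ≠ ⊤)
    (hK : ∀ x ∈ Q, ∀ᵐ y ∂μ, y ∈ Q → κ ≤ K x y)
    (hT : ∀ f : X → ℝ≥0∞, Measurable f →
      (∫⁻ x, (w x * ∫⁻ y, f y * K x y ∂μ) ^ q ∂μ) ^ (1 / q)
        ≤ C * (∫⁻ x, (f x * v x) ^ p ∂μ) ^ (1 / p))
    (hum : Measurable u) (hu : ∀ x, u x ≤ v x ^ (-(p / (p - 1))))
    (hu_top : ∫⁻ x in Q, u x ∂μ ≠ ⊤) :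
    (∫⁻ x in Q, w x ^ q ∂μ) ^ (1 / q) * κ * (∫⁻ x in Q, u x ∂μ) ^ ((p - 1) / p) ≤ C := by
  set S := ∫⁻ x in Q, u x ∂μ
  rcases eq_or_ne S 0 with hS₀ | hS₀
  · rw [hS₀, zero_rpow_of_pos (div_pos (by linarith) (by linarith)), mul_zero]
    exact zero_le
  refine mul_rpow_le_of_mul_le_mul_rpow (by linarith) hS₀ hu_top ?_
  calc (∫⁻ x in Q, w x ^ q ∂μ) ^ (1 / q) * κ * S
      = (∫⁻ x in Q, w x ^ q ∂μ) ^ (1 / q) * (κ * S) := mul_assoc _ _ _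
    _ ≤ (∫⁻ x, (w x * ∫⁻ y, Q.indicator u y * K x y ∂μ) ^ q ∂μ) ^ (1 / q) :=
        setLIntegral_rpow_one_div_mul_le hq hQ fun x hx =>
          const_mul_setLIntegral_le_lintegral_indicator_mul hQ (hK x hx)
    _ ≤ C * (∫⁻ x, (Q.indicator u x * v x) ^ p ∂μ) ^ (1 / p) := hT _ (hum.indicator hQ)
    _ ≤ C * S ^ (1 / p) := by
        gcongr
        exact lintegral_indicator_mul_rpow_le hp hQ hv₀ hv hu

lemma muckenhoupt_bound_of_norm_ineq (hp : 1 < p) (hq : 0 < q)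
    (hQ : MeasurableSet Q) (hμQ : μ Q ≠ ⊤)
    (hvm : Measurable v) (hv₀ : ∀ x, v x ≠ 0) (hv : ∀ x, v x ≠ ⊤)
    (hK : ∀ x ∈ Q, ∀ᵐ y ∂μ, y ∈ Q → κ ≤ K x y)
    (hT : ∀ f : X → ℝ≥0∞, Measurable f →
      (∫⁻ x, (w x * ∫⁻ y, f y * K x y ∂μ) ^ q ∂μ) ^ (1 / q)
        ≤ C * (∫⁻ x, (f x * v x) ^ p ∂μ) ^ (1 / p)) :
    (∫⁻ x in Q, w x ^ q ∂μ) ^ (1 / q) * κ *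
      (∫⁻ x in Q, v x ^ (-(p / (p - 1))) ∂μ) ^ ((p - 1) / p) ≤ C := by
  set g := fun x => v x ^ (-(p / (p - 1)))
  have hgm : Measurable g := hvm.pow_const _
  have htrunc (n : ℕ) :
      (∫⁻ x in Q, w x ^ q ∂μ) ^ (1 / q) * κ * (∫⁻ x in Q, min (g x) n ∂μ) ^ ((p - 1) / p) ≤ C :=
    rpow_setLIntegral_mul_rpow_le_of_norm_ineq hp hq hQ hv₀ hv hK hT (hgm.min measurable_const)
      (fun x => min_le_left _ _)
      (ne_top_of_le_ne_top (by rw [setLIntegral_const]; finiteness)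
        (setLIntegral_mono measurable_const fun x _ => min_le_right (g x) n))
  have hg : ∫⁻ x in Q, g x ∂μ = ⨆ n : ℕ, ∫⁻ x in Q, min (g x) n ∂μ := by
    simp_rw [← lintegral_iSup (fun n => hgm.min measurable_const)
      fun m n hmn x => min_le_min le_rfl (Nat.cast_le.mpr hmn), iSup_min_natCast]
  rw [hg, iSup_rpow _ (div_pos (by linarith) (by linarith)), mul_iSup]
  exact iSup_le htrunc

end NormInequality

section Cube

variable {ι : Type*}

def cube (c : EuclideanSpace ℝ ι) (h : ℝ) : Set (EuclideanSpace ℝ ι) :=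
  {x | ∀ i, |x i - c i| ≤ h / 2}

lemma cube_eq_preimage_pi_Icc (c : EuclideanSpace ℝ ι) (h : ℝ) :
    cube c h = (MeasurableEquiv.toLp 2 (ι → ℝ)).symm ⁻¹'
      Set.univ.pi fun i => Set.Icc (c i - h / 2) (c i + h / 2) := by
  ext x
  simp only [cube, Set.mem_ofPred_eq, Set.mem_preimage, Set.mem_univ_pi, Set.mem_Icc,
    MeasurableEquiv.coe_toLp_symm, abs_sub_le_iff, sub_le_iff_le_add]
  refine forall_congr' fun i => ?_
  constructor <;> rintro ⟨h1, h2⟩ <;> constructor <;> linarith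

variable [Fintype ι]

lemma measurableSet_cube (c : EuclideanSpace ℝ ι) (h : ℝ) : MeasurableSet (cube c h) := by
  rw [cube_eq_preimage_pi_Icc]
  exact MeasurableEquiv.measurable _ (MeasurableSet.univ_pi fun _ => measurableSet_Icc)

lemma volume_cube (c : EuclideanSpace ℝ ι) {h : ℝ} (hh : 0 ≤ h) :
    volume (cube c h) = ENNReal.ofReal (h ^ Fintype.card ι) := by
  rw [cube_eq_preimage_pi_Icc, (EuclideanSpace.volume_preserving_symm_measurableEquiv_toLp ι)
    |>.measure_preimage (MeasurableSet.univ_pi fun _ => measurableSet_Icc).nullMeasurableSet,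
    volume_pi_pi]
  simp [Real.volume_Icc, ENNReal.ofReal_pow hh]

lemma norm_sub_le_of_mem_cube {c x y : EuclideanSpace ℝ ι} {h : ℝ}
    (hx : x ∈ cube c h) (hy : y ∈ cube c h) : ‖x - y‖ ≤ √(Fintype.card ι) * h := by
  have hcoord (i : ι) : |x i - y i| ≤ h := by
    have := abs_sub_le (x i) (c i) (y i)
    rw [abs_sub_comm (c i)] at this
    linarith [hx i, hy i]
  rcases isEmpty_or_nonempty ι with hι | ⟨⟨i₀⟩⟩
  · simp [Subsingleton.elim x y]
  have hh : 0 ≤ h := (abs_nonneg _).trans (hcoord i₀)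
  calc ‖x - y‖ = √(∑ i, |x i - y i| ^ 2) := by simp [EuclideanSpace.norm_eq]
    _ ≤ √(∑ _i : ι, h ^ 2) := by gcongr with i; exact hcoord i
    _ = √(Fintype.card ι) * h := by
      rw [Finset.sum_const, Finset.card_univ, nsmul_eq_mul, Real.sqrt_mul (by positivity),
        Real.sqrt_sq hh]

lemma rpow_le_norm_sub_rpow_of_mem_cube {c x y : EuclideanSpace ℝ ι} {h s : ℝ} (hs : s ≤ 0)
    (hx : x ∈ cube c h) (hy : y ∈ cube c h) (hxy : x ≠ y) :
    (√(Fintype.card ι) * h) ^ s ≤ ‖x - y‖ ^ s :=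
  Real.rpow_le_rpow_of_nonpos (norm_sub_pos_iff.mpr hxy) (norm_sub_le_of_mem_cube hx hy) hs

end Cube

lemma muckenhoupt_scaling {N : ℕ} (hN : N ≠ 0) {h α p q : ℝ} (hh : 0 < h) (hp : 1 ≤ p)
    (hq : 0 < q) (W S : ℝ≥0∞) :
    ENNReal.ofReal ((h ^ N) ^ (α / N - (1 / p - 1 / q))) *
        ((ENNReal.ofReal (h ^ N))⁻¹ * W) ^ (1 / q) *
        ((ENNReal.ofReal (h ^ N))⁻¹ * S) ^ ((p - 1) / p)
      = ENNReal.ofReal (h ^ (α - N)) * (W ^ (1 / q) * S ^ ((p - 1) / p)) := by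
  have hhN : 0 < h ^ N := pow_pos hh N
  have hV₀ : ENNReal.ofReal (h ^ N) ≠ 0 := by simpa using hhN
  rw [inv_mul_rpow_of_nonneg _ _ (by positivity),
    inv_mul_rpow_of_nonneg _ _ (div_nonneg (by linarith) (by linarith)),
    ← ofReal_rpow_of_pos hhN]
  calc _ = ENNReal.ofReal (h ^ N) ^ (α / N - (1 / p - 1 / q) + -(1 / q) + -((p - 1) / p)) *
        (W ^ (1 / q) * S ^ ((p - 1) / p)) := by
        rw [rpow_add _ _ hV₀ ofReal_ne_top, rpow_add _ _ hV₀ ofReal_ne_top]; ring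
    _ = _ := by
      rw [ofReal_rpow_of_pos hhN, ← Real.rpow_natCast, ← Real.rpow_mul hh.le]
      congr 3
      field_simp
      ring

theorem norm_ineq_implies_muckenhoupt_general
    (N : ℕ) (hN : 1 ≤ N) (p q α : ℝ)
    (hp : 1 < p) (hpq : p ≤ q) (hαN : α < (N : ℝ))
    (ω σ : EuclideanSpace ℝ (Fin N) → ℝ)
    (hσ : Measurable σ)
    (hωpos : ∀ x, 0 < ω x) (hσpos : ∀ x, 0 < σ x)
    (C : ℝ)
    (hnorm : ∀ f : EuclideanSpace ℝ (Fin N) → ℝ≥0∞, Measurable f →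
      (∫⁻ x, (ENNReal.ofReal (ω x) *
          ∫⁻ y, f y * ENNReal.ofReal (‖x - y‖ ^ (α - (N : ℝ)))) ^ q) ^ (1 / q)
        ≤ ENNReal.ofReal C * (∫⁻ x, (f x * ENNReal.ofReal (σ x)) ^ p) ^ (1 / p)) :
    ∃ A : ℝ≥0∞, A ≠ ⊤ ∧
      ∀ (c : EuclideanSpace ℝ (Fin N)) (h : ℝ), 0 < h →
        ENNReal.ofReal ((h ^ N) ^ (α / (N : ℝ) - (1 / p - 1 / q))) *
          ((ENNReal.ofReal (h ^ N))⁻¹ *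
            ∫⁻ x in {x : EuclideanSpace ℝ (Fin N) | ∀ i, |x i - c i| ≤ h / 2},
              ENNReal.ofReal (ω x ^ q)) ^ (1 / q) *
          ((ENNReal.ofReal (h ^ N))⁻¹ *
            ∫⁻ x in {x : EuclideanSpace ℝ (Fin N) | ∀ i, |x i - c i| ≤ h / 2},
              ENNReal.ofReal (σ x ^ (-(p / (p - 1))))) ^ ((p - 1) / p) ≤ A := by
  have : NeZero N := ⟨by omega⟩
  have hq : 0 < q := by linarith
  refine ⟨ENNReal.ofReal C * ENNReal.ofReal (√N ^ ((N : ℝ) - α)), by finiteness,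
    fun c h hh => ?_⟩
  set κ := ENNReal.ofReal ((√N * h) ^ (α - N))
  have hK : ∀ x ∈ cube c h, ∀ᵐ y, y ∈ cube c h → κ ≤ ENNReal.ofReal (‖x - y‖ ^ (α - N)) :=
    fun x hx => (Measure.ae_ne volume x).mono fun y hyx hy => ENNReal.ofReal_le_ofReal <| by
      simpa using rpow_le_norm_sub_rpow_of_mem_cube (by linarith) hx hy hyx.symm
  have hbound := muckenhoupt_bound_of_norm_ineq hp hq
    (measurableSet_cube c h) (by rw [volume_cube c hh.le]; finiteness) (by fun_prop)
    (fun x => by simpa using hσpos x) (fun _ => ofReal_ne_top) hK hnorm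
  have hκ : ENNReal.ofReal (h ^ (α - N)) = ENNReal.ofReal (√N ^ ((N : ℝ) - α)) * κ := by
    rw [← ofReal_mul (by positivity), Real.mul_rpow (by positivity) hh.le, ← mul_assoc,
      ← Real.rpow_add (by simpa using Nat.pos_of_neZero N), sub_add_sub_cancel', sub_self,
      Real.rpow_zero, one_mul]
  simp only [ofReal_rpow_of_pos (hωpos _), ofReal_rpow_of_pos (hσpos _)] at hbound
  rw [show {x : EuclideanSpace ℝ (Fin N) | ∀ i, |x i - c i| ≤ h / 2} = cube c h from rfl,
    muckenhoupt_scaling (NeZero.ne N) hh hp.le hq, hκ, mul_comm (ENNReal.ofReal C)]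
  calc _ = ENNReal.ofReal (√N ^ ((N : ℝ) - α)) *
        ((∫⁻ x in cube c h, ENNReal.ofReal (ω x ^ q)) ^ (1 / q) * κ *
          (∫⁻ x in cube c h, ENNReal.ofReal (σ x ^ (-(p / (p - 1))))) ^ ((p - 1) / p)) := by ring
    _ ≤ _ := by gcongr

/-- The weighted norm inequality for the Riesz potential implies finiteness of the
two-weight Muckenhoupt characteristic over cubes. -/
theorem norm_ineq_implies_muckenhoupt
    (N : ℕ) (hN : 1 ≤ N) (p q α : ℝ)
    (hp : 1 < p) (hpq : p ≤ q) (hα : 0 < α) (hαN : α < (N : ℝ))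
    (ω σ : EuclideanSpace ℝ (Fin N) → ℝ)
    (hω : Measurable ω) (hσ : Measurable σ)
    (hωpos : ∀ x, 0 < ω x) (hσpos : ∀ x, 0 < σ x)
    (C : ℝ) (hC : 0 < C)
    (hnorm : ∀ f : EuclideanSpace ℝ (Fin N) → ℝ≥0∞, Measurable f →
      (∫⁻ x, (ENNReal.ofReal (ω x) *
          ∫⁻ y, f y * ENNReal.ofReal (‖x - y‖ ^ (α - (N : ℝ)))) ^ q) ^ (1 / q)
        ≤ ENNReal.ofReal C * (∫⁻ x, (f x * ENNReal.ofReal (σ x)) ^ p) ^ (1 / p)) :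
    ∃ A : ℝ≥0∞, A ≠ ⊤ ∧
      ∀ (c : EuclideanSpace ℝ (Fin N)) (h : ℝ), 0 < h →
        ENNReal.ofReal ((h ^ N) ^ (α / (N : ℝ) - (1 / p - 1 / q))) *
          ((ENNReal.ofReal (h ^ N))⁻¹ *
            ∫⁻ x in {x : EuclideanSpace ℝ (Fin N) | ∀ i, |x i - c i| ≤ h / 2},
              ENNReal.ofReal (ω x ^ q)) ^ (1 / q) *
          ((ENNReal.ofReal (h ^ N))⁻¹ *
            ∫⁻ x in {x : EuclideanSpace ℝ (Fin N) | ∀ i, |x i - c i| ≤ h / 2},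
              ENNReal.ofReal (σ x ^ (-(p / (p - 1))))) ^ ((p - 1) / p) ≤ A :=
  norm_ineq_implies_muckenhoupt_general N hN p q α hp hpq hαN ω σ hσ hωpos hσpos C hnorm
end

section
/- Write ℝ^N = ℝ^{N_1} × ⋯ × ℝ^{N_n} with n ≥ 2, let 0 < α_i < N_i, α = α_1 + ⋯ + α_n, γ, δ ∈ ℝ, 1 < p ≤ q < ∞. Suppose the multi-parameter Muckenhoupt characteristic sup over rectangles Q = Q_1 × ⋯ × Q_n of ∏_i |Q_i|^{α_i/N_i - (1/p - 1/q)} ((1/|Q|)∫_Q |x|^{-γq} dx)^{1/q} ((1/|Q|)∫_Q |x|^{-δp/(p-1)} dx)^{(p-1)/p} is finite. Then for each i = 1, …, n, α_i/N_i ≥ 1/p - 1/q. -/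
open MeasureTheory ENNReal Set Filter Topology

/-! Shrink the `i`-th side of the box to `t → 0` while keeping the other sides equal to `1` and
the centre at `(1, …, 1)`. On such boxes `|x|` lies between two positive constants, so every
power of it, and hence both averages, are bounded below uniformly in `t`; the side-length
factor `(t ^ N_i) ^ (α_i / N_i - (1/p - 1/q))` however tends to `∞` when the exponent is
negative, contradicting the finiteness of the characteristic. -/

lemma euclideanSpace_setOf_abs_sub_le_eq_preimage_pi {ι : Type*} [Fintype ι]
    (c : EuclideanSpace ℝ ι) (d : ℝ) :
    {y : EuclideanSpace ℝ ι | ∀ j, |y j - c j| ≤ d} =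
      (MeasurableEquiv.toLp 2 (ι → ℝ)).symm ⁻¹' univ.pi fun j => Icc (c j - d) (c j + d) := by
  ext y
  simp only [mem_ofPred_eq, mem_preimage, mem_univ_pi, mem_Icc,
    MeasurableEquiv.coe_toLp_symm]
  refine forall_congr' fun j => ?_
  rw [abs_sub_le_iff]
  constructor <;> rintro ⟨h₁, h₂⟩ <;> constructor <;> linarith

lemma measurableSet_euclideanSpace_setOf_abs_sub_le {ι : Type*} [Fintype ι]
    (c : EuclideanSpace ℝ ι) (d : ℝ) :
    MeasurableSet {y : EuclideanSpace ℝ ι | ∀ j, |y j - c j| ≤ d} := by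
  rw [euclideanSpace_setOf_abs_sub_le_eq_preimage_pi]
  exact (MeasurableEquiv.toLp 2 (ι → ℝ)).symm.measurable (.univ_pi fun _ => measurableSet_Icc)

lemma volume_euclideanSpace_setOf_abs_sub_le {ι : Type*} [Fintype ι]
    (c : EuclideanSpace ℝ ι) {d : ℝ} (hd : 0 ≤ d) :
    volume {y : EuclideanSpace ℝ ι | ∀ j, |y j - c j| ≤ d} =
      ENNReal.ofReal ((2 * d) ^ Fintype.card ι) := by
  rw [euclideanSpace_setOf_abs_sub_le_eq_preimage_pi,
    (EuclideanSpace.volume_preserving_symm_measurableEquiv_toLp ι).measure_preimage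
      (MeasurableSet.univ_pi fun _ => measurableSet_Icc).nullMeasurableSet,
    volume_pi_pi]
  simp_rw [Real.volume_Icc, add_sub_sub_cancel, ← two_mul]
  rw [Finset.prod_const, Finset.card_univ, ENNReal.ofReal_pow (by positivity)]

lemma min_rpow_le_rpow_of_mem_Icc {a b r : ℝ} (ha : 0 < a) (hr : r ∈ Icc a b) (s : ℝ) :
    min (a ^ s) (b ^ s) ≤ r ^ s := by
  rcases le_total 0 s with hs | hs
  · exact (min_le_left _ _).trans (Real.rpow_le_rpow ha.le hr.1 hs)
  · exact (min_le_right _ _).trans (Real.rpow_le_rpow_of_nonpos (ha.trans_le hr.1) hr.2 hs)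

lemma le_setLAverage_of_forall_le {α : Type*} [MeasurableSpace α] {μ : Measure α} {s : Set α}
    {f : α → ℝ≥0∞} {c : ℝ≥0∞} (hs : MeasurableSet s) (hμ₀ : μ s ≠ 0) (hμ : μ s ≠ ∞)
    (hf : ∀ x ∈ s, c ≤ f x) : c ≤ ⨍⁻ x in s, f x ∂μ :=
  calc c = ⨍⁻ _ in s, c ∂μ := (setLAverage_const hμ₀ hμ c).symm
    _ ≤ ⨍⁻ x in s, f x ∂μ := laverage_mono_ae (ae_restrict_of_forall_mem hs hf)

lemma exists_mem_Ioc_lt_ofReal_rpow_mul {e : ℝ} (he : e < 0) {K B : ℝ≥0∞} (hK : K ≠ 0)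
    (hB : B ≠ ∞) : ∃ t ∈ Ioc (0 : ℝ) 1, B < ENNReal.ofReal (t ^ e) * K := by
  have hlim : Tendsto (fun t : ℝ => ENNReal.ofReal (t ^ e) * K) (𝓝[>] 0) (𝓝 ∞) := by
    simpa [ENNReal.top_mul hK] using ENNReal.Tendsto.mul_const (b := K)
      (ENNReal.tendsto_ofReal_atTop.comp (tendsto_rpow_neg_nhdsGT_zero he)) (.inl top_ne_zero)
  obtain ⟨t, hBt, ht⟩ := ((hlim.eventually_const_lt hB.lt_top).and (Ioc_mem_nhdsGT one_pos)).exists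
  exact ⟨t, ht, hBt⟩

lemma prod_ofReal_rpow_pow_update_one {ι : Type*} [Fintype ι] [DecidableEq ι] (N : ι → ℕ)
    (e : ι → ℝ) (i₀ : ι) {t : ℝ} (ht : 0 ≤ t) :
    ∏ i, ENNReal.ofReal ((Function.update (1 : ι → ℝ) i₀ t i ^ N i) ^ e i) =
      ENNReal.ofReal (t ^ ((N i₀ : ℝ) * e i₀)) := by
  rw [Finset.prod_eq_single i₀ (fun i _ hi => by simp [hi]) (by simp), Real.rpow_natCast_mul ht]
  simp

section ProductBox

variable {ι : Type*} {κ : ι → Type*}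

lemma setOf_abs_sub_le_eq_pi (c : ∀ i, EuclideanSpace ℝ (κ i)) (h : ι → ℝ) :
    {x : ∀ i, EuclideanSpace ℝ (κ i) | ∀ i j, |x i j - c i j| ≤ h i / 2} =
      univ.pi fun i => {y | ∀ j, |y j - c i j| ≤ h i / 2} := by
  ext x
  simp

variable [Fintype ι] [∀ i, Fintype (κ i)]

lemma measurableSet_setOf_abs_sub_le (c : ∀ i, EuclideanSpace ℝ (κ i)) (h : ι → ℝ) :
    MeasurableSet {x : ∀ i, EuclideanSpace ℝ (κ i) | ∀ i j, |x i j - c i j| ≤ h i / 2} := by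
  rw [setOf_abs_sub_le_eq_pi]
  exact .univ_pi fun i => measurableSet_euclideanSpace_setOf_abs_sub_le _ _

lemma volume_setOf_abs_sub_le (c : ∀ i, EuclideanSpace ℝ (κ i)) {h : ι → ℝ}
    (hh : ∀ i, 0 ≤ h i) :
    volume {x : ∀ i, EuclideanSpace ℝ (κ i) | ∀ i j, |x i j - c i j| ≤ h i / 2} =
      ENNReal.ofReal (∏ i, h i ^ Fintype.card (κ i)) := by
  rw [setOf_abs_sub_le_eq_pi, volume_pi_pi,
    ENNReal.ofReal_prod_of_nonneg fun i _ => pow_nonneg (hh i) _]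
  refine Finset.prod_congr rfl fun i _ => ?_
  rw [volume_euclideanSpace_setOf_abs_sub_le _ (by linarith [hh i]), mul_div_cancel₀ _ two_ne_zero]

lemma sum_norm_sq_mem_Icc {x : ∀ i, EuclideanSpace ℝ (κ i)} {a b : ℝ} (ha : 0 ≤ a)
    (hx : ∀ i j, |x i j| ∈ Icc a b) :
    ∑ i, ‖x i‖ ^ 2 ∈ Icc (a ^ 2 * ∑ i, (Fintype.card (κ i) : ℝ))
      (b ^ 2 * ∑ i, (Fintype.card (κ i) : ℝ)) := by
  simp_rw [EuclideanSpace.real_norm_sq_eq, Finset.mul_sum]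
  have hsq : ∀ i j, x i j ^ 2 ∈ Icc (a ^ 2) (b ^ 2) := fun i j => by
    rw [← sq_abs (x i j)]
    exact ⟨pow_le_pow_left₀ ha (hx i j).1 2, pow_le_pow_left₀ (abs_nonneg _) (hx i j).2 2⟩
  constructor <;> refine Finset.sum_le_sum fun i _ => ?_ <;>
    rw [mul_comm, ← nsmul_eq_mul, ← Finset.card_univ]
  exacts [Finset.card_nsmul_le_sum _ _ _ fun j _ => (hsq i j).1,
    Finset.sum_le_card_nsmul _ _ _ fun j _ => (hsq i j).2]

lemma exists_pos_le_average_rpow_norm (hκ : 0 < ∑ i, (Fintype.card (κ i) : ℝ))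
    {c : ∀ i, EuclideanSpace ℝ (κ i)} (hc : ∀ i j, c i j = 1) (s : ℝ) :
    ∃ m > 0, ∀ h : ι → ℝ, (∀ i, 0 < h i ∧ h i ≤ 1) →
      ENNReal.ofReal m ≤ (ENNReal.ofReal (∏ i, h i ^ Fintype.card (κ i)))⁻¹ *
        ∫⁻ x in {x : ∀ i, EuclideanSpace ℝ (κ i) | ∀ i j, |x i j - c i j| ≤ h i / 2},
          ENNReal.ofReal (√(∑ i, ‖x i‖ ^ 2) ^ s) := by
  set M := ∑ i, (Fintype.card (κ i) : ℝ)
  have ha : 0 < √((1 / 2) ^ 2 * M) := Real.sqrt_pos.2 (by positivity)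
  have hab : √((1 / 2) ^ 2 * M) ≤ √((3 / 2) ^ 2 * M) := Real.sqrt_le_sqrt (by gcongr; norm_num)
  refine ⟨_, lt_min (Real.rpow_pos_of_pos ha s) (Real.rpow_pos_of_pos (ha.trans_le hab) s),
    fun h hh => ?_⟩
  have hvol := volume_setOf_abs_sub_le c fun i => (hh i).1.le
  rw [← hvol, ← ENNReal.div_eq_inv_mul, ← setLAverage_eq]
  refine le_setLAverage_of_forall_le (measurableSet_setOf_abs_sub_le _ _) ?_ ?_ fun x hx => ?_
  · rw [hvol]
    exact (ENNReal.ofReal_pos.2 (Finset.prod_pos fun i _ => pow_pos (hh i).1 _)).ne'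
  · rw [hvol]
    exact ENNReal.ofReal_ne_top
  refine ENNReal.ofReal_le_ofReal (min_rpow_le_rpow_of_mem_Icc ha ?_ s)
  have hcoord : ∀ i j, |x i j| ∈ Icc (1 / 2) (3 / 2) := fun i j => by
    have := hx i j
    rw [hc, abs_sub_le_iff] at this
    rw [abs_of_pos (by linarith [(hh i).2]), mem_Icc]
    constructor <;> linarith [(hh i).2]
  have := sum_norm_sq_mem_Icc (by norm_num) hcoord
  exact ⟨Real.sqrt_le_sqrt this.1, Real.sqrt_le_sqrt this.2⟩

end ProductBox

theorem product_muckenhoupt_implies_subbalance_general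
    (n : ℕ) (N : Fin n → ℕ) (hN : ∀ i, 1 ≤ N i)
    (α : Fin n → ℝ)
    (p q γ δ : ℝ) (hp : 1 < p) (hpq : p ≤ q)
    (A : ℝ≥0∞) (hA : A ≠ ⊤)
    (hchar : ∀ (c : ∀ i, EuclideanSpace ℝ (Fin (N i))) (h : Fin n → ℝ),
      (∀ i, 0 < h i) →
      (∏ i, ENNReal.ofReal ((h i ^ N i) ^ (α i / (N i : ℝ) - (1 / p - 1 / q)))) *
        ((ENNReal.ofReal (∏ i, h i ^ N i))⁻¹ *
          ∫⁻ x in {x : ∀ i, EuclideanSpace ℝ (Fin (N i)) |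
              ∀ i j, |x i j - c i j| ≤ h i / 2},
            ENNReal.ofReal ((Real.sqrt (∑ i, ‖x i‖ ^ 2)) ^ (-(γ * q)))) ^ (1 / q) *
        ((ENNReal.ofReal (∏ i, h i ^ N i))⁻¹ *
          ∫⁻ x in {x : ∀ i, EuclideanSpace ℝ (Fin (N i)) |
              ∀ i j, |x i j - c i j| ≤ h i / 2},
            ENNReal.ofReal ((Real.sqrt (∑ i, ‖x i‖ ^ 2)) ^
              (-(δ * (p / (p - 1)))))) ^ ((p - 1) / p) ≤ A) :
    ∀ i, α i / (N i : ℝ) ≥ 1 / p - 1 / q := by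
  intro i₀
  by_contra! hlt
  have he : (N i₀ : ℝ) * (α i₀ / N i₀ - (1 / p - 1 / q)) < 0 :=
    mul_neg_of_pos_of_neg (by exact_mod_cast hN i₀) (by linarith)
  have hκ : 0 < ∑ i, (Fintype.card (Fin (N i)) : ℝ) := Finset.sum_pos' (fun i _ => by positivity)
    ⟨i₀, Finset.mem_univ _, by rw [Fintype.card_fin]; exact_mod_cast hN i₀⟩
  set c : ∀ i, EuclideanSpace ℝ (Fin (N i)) := fun i => WithLp.toLp 2 fun _ => 1
  obtain ⟨m₁, hm₁, hw₁⟩ := exists_pos_le_average_rpow_norm hκ (c := c) (fun _ _ => rfl) (-(γ * q))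
  obtain ⟨m₂, hm₂, hw₂⟩ :=
    exists_pos_le_average_rpow_norm hκ (c := c) (fun _ _ => rfl) (-(δ * (p / (p - 1))))
  simp only [Fintype.card_fin] at hw₁ hw₂
  have hq : 0 < q := by linarith
  have hK : ENNReal.ofReal m₁ ^ (1 / q) * ENNReal.ofReal m₂ ^ ((p - 1) / p) ≠ 0 :=
    mul_ne_zero (ENNReal.rpow_pos (by simpa using hm₁) ENNReal.ofReal_ne_top).ne'
      (ENNReal.rpow_pos (by simpa using hm₂) ENNReal.ofReal_ne_top).ne'
  obtain ⟨t, ⟨ht₀, ht₁⟩, hbig⟩ := exists_mem_Ioc_lt_ofReal_rpow_mul he hK hA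
  set h : Fin n → ℝ := Function.update 1 i₀ t
  have hh : ∀ i, 0 < h i ∧ h i ≤ 1 := fun i => by
    rcases eq_or_ne i i₀ with rfl | hi <;> simp [h, *]
  refine hbig.not_ge (le_trans ?_ (hchar c h fun i => (hh i).1))
  rw [prod_ofReal_rpow_pow_update_one N (fun i => α i / N i - (1 / p - 1 / q)) i₀ ht₀.le,
    mul_assoc]
  gcongr
  exacts [hw₁ h hh, hw₂ h hh]

/-- Finiteness of the multi-parameter Muckenhoupt characteristic for power weights
implies `α_i/N_i ≥ 1/p - 1/q` for every factor. -/
theorem product_muckenhoupt_implies_subbalance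
    (n : ℕ) (hn : 2 ≤ n) (N : Fin n → ℕ) (hN : ∀ i, 1 ≤ N i)
    (α : Fin n → ℝ) (hα : ∀ i, 0 < α i) (hαN : ∀ i, α i < (N i : ℝ))
    (p q γ δ : ℝ) (hp : 1 < p) (hpq : p ≤ q)
    (A : ℝ≥0∞) (hA : A ≠ ⊤)
    (hchar : ∀ (c : ∀ i, EuclideanSpace ℝ (Fin (N i))) (h : Fin n → ℝ),
      (∀ i, 0 < h i) →
      (∏ i, ENNReal.ofReal ((h i ^ N i) ^ (α i / (N i : ℝ) - (1 / p - 1 / q)))) *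
        ((ENNReal.ofReal (∏ i, h i ^ N i))⁻¹ *
          ∫⁻ x in {x : ∀ i, EuclideanSpace ℝ (Fin (N i)) |
              ∀ i j, |x i j - c i j| ≤ h i / 2},
            ENNReal.ofReal ((Real.sqrt (∑ i, ‖x i‖ ^ 2)) ^ (-(γ * q)))) ^ (1 / q) *
        ((ENNReal.ofReal (∏ i, h i ^ N i))⁻¹ *
          ∫⁻ x in {x : ∀ i, EuclideanSpace ℝ (Fin (N i)) |
              ∀ i j, |x i j - c i j| ≤ h i / 2},
            ENNReal.ofReal ((Real.sqrt (∑ i, ‖x i‖ ^ 2)) ^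
              (-(δ * (p / (p - 1)))))) ^ ((p - 1) / p) ≤ A) :
    ∀ i, α i / (N i : ℝ) ≥ 1 / p - 1 / q :=
  product_muckenhoupt_implies_subbalance_general n N hN α p q γ δ hp hpq A hA hchar
end

section
/- Write ℝ^N = ℝ^{N_1} × ⋯ × ℝ^{N_n}, and suppose α_i/N_i = 1/p - 1/q for all i with 1 < p < q < ∞. Let ω be a weight on ℝ^N such that for each i and almost every x_i† ∈ ℝ^{N - N_i}, the one-parameter weighted inequality ‖(f ∗ |x_i|^{α_i - N_i}) ω(·, x_i†)‖_{L^q(ℝ^{N_i})} ≤ C ‖f ω(·, x_i†)‖_{L^p(ℝ^{N_i})} holds with a uniform constant C. Then the strong fractional integral operator I_α f(x) = ∫ f(y) ∏_i |x_i - y_i|^{α_i - N_i} dy satisfies ‖ω I_α f‖_{L^q(ℝ^N)} ≤ C' ‖f ω‖_{L^p(ℝ^N)} for nonnegative f, where C' depends on C, p, q, n, N. -/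
/-!
Write `T_t` for the operator that applies the kernels `k_j(x_j, y_j)` only in the coordinates
`j ∈ t`, and consider the mixed norms `N(t) = ‖‖(T_t f) ω‖_{L^q(t)}‖_{L^p(tᶜ)}`. Then `N(univ)` is
the left-hand side and `N(∅) = ‖f ω‖_p`. Moving one coordinate `i` out of `t` costs a factor `C`:
in the slice of coordinate `i` the one-parameter inequality bounds the `L^q` norm in `x_i` by `C`
times an `L^p` norm in `x_i`, and since `p < q`, Minkowski's integral inequality (with exponent
`q / p`) lets that `L^p` norm in `x_i` be pulled outside the `L^q` norm over the other coordinates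
of `t`. After `n` steps, `C' = C ^ n`.
-/

open MeasureTheory ENNReal Function

section Minkowski

variable {α β : Type*} [MeasurableSpace α] [MeasurableSpace β] {μ : Measure α} {ν : Measure β}
  {r : ℝ}

lemma ENNReal.rpow_one_div_le_of_le_mul_rpow {M R : ℝ≥0∞} (hr : 1 < r) (hM : M ≠ ∞)
    (h : M ≤ R * M ^ (1 - 1 / r)) : M ^ (1 / r) ≤ R := by
  rcases eq_or_ne M 0 with rfl | hM0
  · rw [zero_rpow_of_pos (one_div_pos.2 (zero_lt_one.trans hr))]
    exact zero_le
  have hsplit : M = M ^ (1 / r) * M ^ (1 - 1 / r) := by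
    rw [← rpow_add _ _ hM0 hM, add_sub_cancel, rpow_one]
  have hexp : 0 ≤ 1 - 1 / r := by
    rw [sub_nonneg, div_le_one (zero_lt_one.trans hr)]
    exact hr.le
  exact (ENNReal.mul_le_mul_iff_left (rpow_pos (pos_iff_ne_zero.2 hM0) hM).ne'
    (rpow_ne_top_of_nonneg hexp hM)).1 (hsplit ▸ h)

lemma ENNReal.le_mul_rpow_of_rpow_one_div_le {A B C : ℝ≥0∞} {p q : ℝ} (hq : 0 < q)
    (h : A ^ (1 / q) ≤ C * B ^ (1 / p)) : A ≤ C ^ q * B ^ (q / p) := by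
  rw [one_div, rpow_inv_le_iff hq, mul_rpow_of_nonneg _ _ hq.le, ← rpow_mul,
    one_div_mul_eq_div] at h
  exact h

lemma iSup_indicator_spanningSets_min_natCast [SigmaFinite μ] (g : α → ℝ≥0∞) (a : α) :
    ⨆ n : ℕ, (spanningSets μ n).indicator (fun a => min (g a) n) a = g a := by
  refine le_antisymm (iSup_le fun n => ?_) ?_
  · exact (Set.indicator_le_self' fun _ _ => zero_le) a |>.trans (min_le_left _ _)
  obtain ⟨m, hm⟩ := Set.mem_iUnion.1 ((iUnion_spanningSets μ).symm ▸ Set.mem_univ a)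
  calc g a = ⨆ k : ℕ, min (g a) k := by
        rw [← inf_iSup_eq, ENNReal.iSup_natCast, inf_top_eq]
    _ ≤ _ := iSup_le fun k => by
        refine le_iSup_of_le (max k m) ?_
        rw [Set.indicator_of_mem (monotone_spanningSets μ (le_max_right k m) hm)]
        exact min_le_min le_rfl (Nat.cast_le.2 (le_max_left k m))

variable [SFinite ν] {F : α → β → ℝ≥0∞}

lemma lintegral_rpow_le_of_le_lintegral [SFinite μ] (hF : Measurable (uncurry F)) (hr : 1 < r)
    {h : α → ℝ≥0∞} (hh : Measurable h) (hhF : ∀ a, h a ≤ ∫⁻ b, F a b ∂ν)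
    (hfin : ∫⁻ a, h a ^ r ∂μ ≠ ∞) :
    (∫⁻ a, h a ^ r ∂μ) ^ (1 / r) ≤ ∫⁻ b, (∫⁻ a, F a b ^ r ∂μ) ^ (1 / r) ∂ν := by
  have hr0 : 0 < r := zero_lt_one.trans hr
  set M := ∫⁻ a, h a ^ r ∂μ
  have hpow : ∀ a, (h a ^ (r - 1)) ^ r.conjExponent = h a ^ r := fun a => by
    rw [← rpow_mul, Real.conjExponent, mul_div_cancel₀ _ (sub_pos.2 hr).ne']
  have hexp : 1 / r.conjExponent = 1 - 1 / r := by
    rw [Real.conjExponent, one_div_div, sub_div, div_self hr0.ne']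
  refine rpow_one_div_le_of_le_mul_rpow hr hfin ?_
  calc M = ∫⁻ a, h a * h a ^ (r - 1) ∂μ := by
        refine lintegral_congr fun a => ?_
        conv_lhs => rw [← add_sub_cancel 1 r]
        rw [rpow_add_of_nonneg _ _ zero_le_one (sub_nonneg.2 hr.le), rpow_one]
    _ ≤ ∫⁻ a, (∫⁻ b, F a b ∂ν) * h a ^ (r - 1) ∂μ := by gcongr with a; exact hhF a
    _ = ∫⁻ b, ∫⁻ a, F a b * h a ^ (r - 1) ∂μ ∂ν := by
        rw [← lintegral_lintegral_swap (by fun_prop)]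
        exact lintegral_congr fun a =>
          (lintegral_mul_const'' _ hF.of_uncurry_left.aemeasurable).symm
    _ ≤ ∫⁻ b, (∫⁻ a, F a b ^ r ∂μ) ^ (1 / r) * M ^ (1 - 1 / r) ∂ν := by
        gcongr with b
        refine (lintegral_mul_le_Lp_mul_Lq μ (Real.HolderConjugate.conjExponent hr)
          hF.of_uncurry_right.aemeasurable (hh.pow_const _).aemeasurable).trans_eq ?_
        simp only [hpow, hexp, M]
    _ = (∫⁻ b, (∫⁻ a, F a b ^ r ∂μ) ^ (1 / r) ∂ν) * M ^ (1 - 1 / r) :=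
        lintegral_mul_const'' _ (by fun_prop)

/-- **Minkowski's integral inequality**. -/
theorem lintegral_rpow_lintegral_le [SigmaFinite μ] (hF : Measurable (uncurry F)) (hr : 1 < r) :
    (∫⁻ a, (∫⁻ b, F a b ∂ν) ^ r ∂μ) ^ (1 / r) ≤ ∫⁻ b, (∫⁻ a, F a b ^ r ∂μ) ^ (1 / r) ∂ν := by
  have hr0 : 0 < r := zero_lt_one.trans hr
  set G : α → ℝ≥0∞ := fun a => ∫⁻ b, F a b ∂ν
  have hG : Measurable G := hF.lintegral_prod_right'
  -- truncate `G` in height and to sets of finite measure, so that Hölder's step applies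
  set h : ℕ → α → ℝ≥0∞ := fun n => (spanningSets μ n).indicator (fun a => min (G a) n)
  have hh : ∀ n, Measurable (h n) := fun n =>
    (hG.min measurable_const).indicator (measurableSet_spanningSets μ n)
  have hmono : Monotone fun n a => h n a ^ r := fun m n hmn a => by
    refine rpow_le_rpow ((Set.indicator_le_indicator_of_subset (monotone_spanningSets μ hmn)
      (fun _ => zero_le) a).trans (Set.indicator_le_indicator ?_)) hr0.le
    exact min_le_min le_rfl (Nat.cast_le.2 hmn)
  have hfin : ∀ n, ∫⁻ a, h n a ^ r ∂μ ≠ ∞ := fun n => by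
    refine ne_top_of_le_ne_top ?_ (lintegral_mono (g := (spanningSets μ n).indicator
      fun _ => (n : ℝ≥0∞) ^ r) fun a => ?_)
    · rw [lintegral_indicator_const (measurableSet_spanningSets μ n)]
      exact mul_ne_top (rpow_ne_top_of_nonneg hr0.le (natCast_ne_top n))
        (measure_spanningSets_lt_top μ n).ne
    · by_cases ha : a ∈ spanningSets μ n
      · simp only [h, Set.indicator_of_mem ha]
        exact rpow_le_rpow (min_le_right _ _) hr0.le
      · simp only [h, Set.indicator_of_notMem ha, zero_rpow_of_pos hr0, le_refl]
  have hsup : ∫⁻ a, G a ^ r ∂μ = ⨆ n, ∫⁻ a, h n a ^ r ∂μ := by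
    rw [← lintegral_iSup (fun n => (hh n).pow_const r) hmono]
    refine lintegral_congr fun a => ?_
    rw [← iSup_indicator_spanningSets_min_natCast (μ := μ) G a]
    exact (orderIsoRpow r hr0).map_iSup _
  rw [hsup, ← orderIsoRpow_apply (1 / r) (one_div_pos.2 hr0), OrderIso.map_iSup]
  exact iSup_le fun n => lintegral_rpow_le_of_le_lintegral hF hr (hh n)
    (fun a => (Set.indicator_le_self' (fun _ _ => zero_le) a).trans (min_le_left _ _)) (hfin n)

end Minkowski

section Marginal

variable {δ : Type*} [DecidableEq δ] {π : δ → Type*} [∀ i, MeasurableSpace (π i)]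
  {μ : ∀ i, Measure (π i)} {s t : Finset δ} {i : δ}

lemma lmarginal_const_mul (c : ℝ≥0∞) {F : (∀ i, π i) → ℝ≥0∞} (hF : Measurable F)
    (x : ∀ i, π i) : (∫⋯∫⁻_s, (fun z => c * F z) ∂μ) x = c * (∫⋯∫⁻_s, F ∂μ) x :=
  lintegral_const_mul c (hF.comp measurable_updateFinset)

variable [∀ i, SigmaFinite (μ i)]

theorem lmarginal_rpow_lmarginal_singleton_le {H : (∀ j, π j) → ℝ≥0∞} (hH : Measurable H)
    (hi : i ∉ t) {r : ℝ} (hr : 1 < r) (x : ∀ j, π j) :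
    ((∫⋯∫⁻_t, (fun z => (∫⋯∫⁻_{i}, H ∂μ) z ^ r) ∂μ) x) ^ (1 / r)
      ≤ (∫⋯∫⁻_{i}, (fun z => (∫⋯∫⁻_t, (fun z => H z ^ r) ∂μ) z ^ (1 / r)) ∂μ) x := by
  simp only [lmarginal_singleton, lmarginal_update_of_notMem (hH.pow_const r) hi]
  exact lintegral_rpow_lintegral_le (by fun_prop) hr

lemma ae_ae_of_lmarginal_union_eq_zero {g : (∀ j, π j) → ℝ≥0∞} (hg : Measurable g)
    (hst : Disjoint s t) {x : ∀ j, π j} (h : (∫⋯∫⁻_(s ∪ t), g ∂μ) x = 0) :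
    ∀ᵐ y ∂Measure.pi (fun j : s => μ j), ∀ᵐ w ∂Measure.pi (fun j : t => μ j),
      g (updateFinset (updateFinset x s y) t w) = 0 := by
  rw [lmarginal_union μ g hg hst, lmarginal] at h
  filter_upwards [(lintegral_eq_zero_iff ((hg.lmarginal μ).comp measurable_updateFinset)).1 h]
    with y hy
  exact (lintegral_eq_zero_iff (by fun_prop)).1 hy

variable [Fintype δ]

lemma ae_ae_updateFinset_of_ae_pi {P : (∀ j, π j) → Prop} (hPm : MeasurableSet {z | P z})
    (hP : ∀ᵐ z ∂Measure.pi μ, P z) (hi : i ∉ t) [NeZero (μ i)]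
    (hPi : ∀ z a, P (update z i a) → P z) (x : ∀ j, π j) :
    ∀ᵐ y ∂Measure.pi (fun j : ↥(insert i t)ᶜ => μ j), ∀ᵐ w ∂Measure.pi (fun j : t => μ j),
      P (updateFinset (updateFinset x (insert i t)ᶜ y) t w) := by
  set g : (∀ j, π j) → ℝ≥0∞ := {z | P z}ᶜ.indicator 1
  have hg : Measurable g := measurable_one.indicator hPm.compl
  have hdisj : Disjoint (insert i t)ᶜ t := disjoint_compl_left.mono_right (t.subset_insert i)
  have huniv : ((insert i t)ᶜ ∪ t) ∪ {i} = Finset.univ := by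
    ext j
    simp only [Finset.mem_union, Finset.mem_compl, Finset.mem_insert, Finset.mem_singleton,
      Finset.mem_univ, iff_true]
    tauto
  have h0 : (∫⋯∫⁻_((insert i t)ᶜ ∪ t), (∫⋯∫⁻_{i}, g ∂μ) ∂μ) x = 0 := by
    rw [← lmarginal_union μ g hg (Finset.disjoint_singleton_right.2 ?_), huniv, lmarginal_univ]
    · rw [lintegral_indicator_one hPm.compl]
      exact ae_iff.1 hP
    · simp [hi]
  filter_upwards [ae_ae_of_lmarginal_union_eq_zero (hg.lmarginal μ) hdisj h0] with y hy
  filter_upwards [hy] with w hw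
  rw [lmarginal_singleton, lintegral_eq_zero_iff (by fun_prop)] at hw
  obtain ⟨a, ha⟩ := hw.exists
  refine hPi _ a (by_contra fun hPa => ?_)
  simp [g, hPa] at ha

lemma lmarginal_rpow_lmarginal_le_of_ae {Φ Θ : (∀ j, π j) → ℝ≥0∞} (hΦ : Measurable Φ)
    (hΘ : Measurable Θ) (hi : i ∉ t) [NeZero (μ i)] (hΦi : ∀ z a, Φ (update z i a) = Φ z)
    (hΘi : ∀ z a, Θ (update z i a) = Θ z) (h : ∀ᵐ z ∂Measure.pi μ, Φ z ≤ Θ z) {e : ℝ}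
    (he : 0 ≤ e) (x : ∀ j, π j) :
    (∫⋯∫⁻_(insert i t)ᶜ, (fun z => (∫⋯∫⁻_t, Φ ∂μ) z ^ e) ∂μ) x
      ≤ (∫⋯∫⁻_(insert i t)ᶜ, (fun z => (∫⋯∫⁻_t, Θ ∂μ) z ^ e) ∂μ) x := by
  have hae := ae_ae_updateFinset_of_ae_pi (measurableSet_le hΦ hΘ) h hi
    (fun z a hz => by rwa [hΦi, hΘi] at hz) x
  exact lintegral_mono_ae (hae.mono fun y hy => rpow_le_rpow (lintegral_mono_ae hy) he)

/-- Minkowski's inequality with exponent `q / p` moves the coordinate `i` from the inner `L^p`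
norm to the outer one. -/
lemma lmarginal_rpow_lmarginal_rpow_singleton_le {F : (∀ j, π j) → ℝ≥0∞} (hF : Measurable F)
    (hi : i ∉ t) {p q : ℝ} (hp : 0 < p) (hpq : p < q) (x : ∀ j, π j) :
    (∫⋯∫⁻_(insert i t)ᶜ, (fun z => (∫⋯∫⁻_t,
        (fun z => (∫⋯∫⁻_{i}, (fun w => F w ^ p) ∂μ) z ^ (q / p)) ∂μ) z ^ (p / q)) ∂μ) x
      ≤ (∫⋯∫⁻_tᶜ, (fun z => (∫⋯∫⁻_t, (fun w => F w ^ q) ∂μ) z ^ (p / q)) ∂μ) x := by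
  have htc : tᶜ = {i} ∪ (insert i t)ᶜ := by ext j; by_cases j = i <;> simp_all
  rw [htc, lmarginal_union' μ _ (((hF.pow_const q).lmarginal μ).pow_const _)
    (disjoint_compl_right.mono_left (Finset.singleton_subset_iff.2 (t.mem_insert_self i)))]
  refine lmarginal_mono (fun z => ?_) x
  simpa only [one_div_div, ← rpow_mul, mul_div_cancel₀ _ hp.ne'] using
    lmarginal_rpow_lmarginal_singleton_le (hF.pow_const p) hi ((one_lt_div hp).2 hpq) z

end Marginal

section KernelOp

variable {δ : Type*} [DecidableEq δ] {π : δ → Type*} [∀ i, MeasurableSpace (π i)]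
  (μ : ∀ i, Measure (π i)) (k : ∀ i, π i → π i → ℝ≥0∞)

/-- `T_t f x = ∫ f(y) ∏_{j ∈ t} k_j(x_j, y_j) dy_t`, where `y_j = x_j` for `j ∉ t`. -/
noncomputable def partialKernelOp (t : Finset δ) (f : (∀ i, π i) → ℝ≥0∞) (x : ∀ i, π i) : ℝ≥0∞ :=
  (∫⋯∫⁻_t, (fun y => f y * ∏ j ∈ t, k j (x j) (y j)) ∂μ) x

variable {μ k} {f : (∀ i, π i) → ℝ≥0∞}

@[simp]
lemma partialKernelOp_empty : partialKernelOp μ k ∅ f = f := by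
  ext x; simp [partialKernelOp]

variable [∀ i, SigmaFinite (μ i)]

lemma partialKernelOp_univ [Fintype δ] (x : ∀ i, π i) :
    partialKernelOp μ k Finset.univ f x = ∫⁻ y, f y * ∏ j, k j (x j) (y j) ∂Measure.pi μ := by
  simp [partialKernelOp]

variable (hk : ∀ i, Measurable (uncurry (k i))) (hf : Measurable f)
include hk hf

lemma measurable_partialKernelOp_integrand (t : Finset δ) :
    Measurable fun p : (∀ i, π i) × (∀ i : t, π i) =>
      f (updateFinset p.1 t p.2) * ∏ j ∈ t, k j (p.1 j) (updateFinset p.1 t p.2 j) :=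
  (hf.comp measurable_updateFinset').mul (Finset.measurable_prod t fun j _ =>
    (hk j).comp ((measurable_pi_apply j).comp measurable_fst |>.prodMk
      ((measurable_pi_apply j).comp measurable_updateFinset')))

lemma measurable_partialKernelOp (t : Finset δ) : Measurable (partialKernelOp μ k t f) :=
  (measurable_partialKernelOp_integrand hk hf t).lintegral_prod_right'

lemma partialKernelOp_insert {t : Finset δ} {i : δ} (hi : i ∉ t) (x : ∀ i, π i) :
    partialKernelOp μ k (insert i t) f x
      = ∫⁻ b, partialKernelOp μ k t f (update x i b) * k i (x i) b ∂μ i := by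
  have hprod : ∀ b w, ∏ j ∈ insert i t, k j (x j) (updateFinset (update x i b) t w j)
      = k i (x i) b * ∏ j ∈ t, k j (update x i b j) (updateFinset (update x i b) t w j) := by
    intro b w
    rw [Finset.prod_insert hi, updateFinset, dif_neg hi, update_self]
    congr 1
    refine Finset.prod_congr rfl fun j hj => ?_
    rw [update_of_ne (ne_of_mem_of_not_mem hj hi)]
  rw [partialKernelOp, lmarginal_insert _ ?_ hi]
  · refine lintegral_congr fun b => ?_
    simp only [lmarginal, hprod, partialKernelOp, mul_left_comm _ (k i (x i) b),
      mul_comm _ (k i (x i) b)]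
    exact lintegral_const_mul _
      ((measurable_partialKernelOp_integrand hk hf t).comp measurable_prodMk_left)
  · exact hf.mul (Finset.measurable_prod _ fun j _ =>
      (hk j).comp (measurable_const.prodMk (measurable_pi_apply j)))

end KernelOp

section MixedNorm

variable {δ : Type*} [DecidableEq δ] [Fintype δ] {π : δ → Type*} [∀ i, MeasurableSpace (π i)]
  (μ : ∀ i, Measure (π i)) (p q : ℝ)

/-- The mixed norm `‖‖F‖_{L^q(t)}‖_{L^p(tᶜ)}`, evaluated at the base point `x` (on which it does
not depend). -/
noncomputable def mixedNorm (t : Finset δ) (F : (∀ i, π i) → ℝ≥0∞) (x : ∀ i, π i) : ℝ≥0∞ :=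
  ((∫⋯∫⁻_tᶜ, (fun z => (∫⋯∫⁻_t, (fun w => F w ^ q) ∂μ) z ^ (p / q)) ∂μ) x) ^ (1 / p)

variable {μ p q} [∀ i, SigmaFinite (μ i)]

lemma mixedNorm_empty (hq : q ≠ 0) (F : (∀ i, π i) → ℝ≥0∞) (x : ∀ i, π i) :
    mixedNorm μ p q ∅ F x = (∫⁻ z, F z ^ p ∂Measure.pi μ) ^ (1 / p) := by
  simp only [mixedNorm, Finset.compl_empty, lmarginal_empty, lmarginal_univ, ← rpow_mul,
    mul_div_cancel₀ _ hq]

lemma mixedNorm_univ (hp : p ≠ 0) (F : (∀ i, π i) → ℝ≥0∞) (x : ∀ i, π i) :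
    mixedNorm μ p q Finset.univ F x = (∫⁻ z, F z ^ q ∂Measure.pi μ) ^ (1 / q) := by
  rw [mixedNorm, Finset.compl_univ, lmarginal_empty, lmarginal_univ, ← rpow_mul]
  congr 1
  field_simp

end MixedNorm

section Step

variable {δ : Type*} [DecidableEq δ] [Fintype δ] {π : δ → Type*} [∀ i, MeasurableSpace (π i)]
  {μ : ∀ i, Measure (π i)} [∀ i, SigmaFinite (μ i)] {t : Finset δ} {i : δ}
  {k : ∀ i, π i → π i → ℝ≥0∞} (hk : ∀ i, Measurable (uncurry (k i)))
  {f : (∀ i, π i) → ℝ≥0∞} (hf : Measurable f) {W : (∀ i, π i) → ℝ≥0∞} (hW : Measurable W)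
  {p q : ℝ} {C : ℝ≥0∞}
include hk hf

lemma ae_lmarginal_singleton_le (hq : 0 < q) (hi : i ∉ t)
    (hslice : ∀ᵐ x ∂Measure.pi μ, ∀ g : π i → ℝ≥0∞, Measurable g →
      (∫⁻ y, ((∫⁻ z, g z * k i y z ∂μ i) * W (update x i y)) ^ q ∂μ i) ^ (1 / q)
        ≤ C * (∫⁻ y, (g y * W (update x i y)) ^ p ∂μ i) ^ (1 / p)) :
    ∀ᵐ x ∂Measure.pi μ,
      (∫⋯∫⁻_{i}, (fun w => (partialKernelOp μ k (insert i t) f w * W w) ^ q) ∂μ) x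
        ≤ C ^ q * (∫⋯∫⁻_{i}, (fun w => (partialKernelOp μ k t f w * W w) ^ p) ∂μ) x ^ (q / p) := by
  filter_upwards [hslice] with x hx
  have h := hx (fun b => partialKernelOp μ k t f (update x i b))
    ((measurable_partialKernelOp hk hf t).comp (measurable_update x))
  simp only [lmarginal_singleton]
  refine le_mul_rpow_of_rpow_one_div_le hq ?_
  convert h using 6 with y
  rw [partialKernelOp_insert hk hf hi]
  simp only [update_idem, update_self]

include hW in
theorem mixedNorm_partialKernelOp_insert_le (hp : 0 < p) (hpq : p < q) (hi : i ∉ t)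
    [NeZero (μ i)]
    (hslice : ∀ᵐ x ∂Measure.pi μ, ∀ g : π i → ℝ≥0∞, Measurable g →
      (∫⁻ y, ((∫⁻ z, g z * k i y z ∂μ i) * W (update x i y)) ^ q ∂μ i) ^ (1 / q)
        ≤ C * (∫⁻ y, (g y * W (update x i y)) ^ p ∂μ i) ^ (1 / p)) (x : ∀ j, π j) :
    mixedNorm μ p q (insert i t) (fun z => partialKernelOp μ k (insert i t) f z * W z) x
      ≤ C * mixedNorm μ p q t (fun z => partialKernelOp μ k t f z * W z) x := by
  have hq : 0 < q := hp.trans hpq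
  have hpq0 : 0 ≤ p / q := div_nonneg hp.le hq.le
  set F := fun z => partialKernelOp μ k t f z * W z
  set G := fun w => (partialKernelOp μ k (insert i t) f w * W w) ^ q
  set Ψ := ∫⋯∫⁻_{i}, (fun w => F w ^ p) ∂μ
  have hF : Measurable F := (measurable_partialKernelOp hk hf t).mul hW
  have hG : Measurable G := ((measurable_partialKernelOp hk hf _).mul hW).pow_const q
  have hΨ : Measurable Ψ := (hF.pow_const p).lmarginal μ
  have hΨi : ∀ z a, Ψ (update z i a) = Ψ z :=
    lmarginal_update_of_mem μ (Finset.mem_singleton_self i) _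
  have hGu : ∫⋯∫⁻_(insert i t), G ∂μ = ∫⋯∫⁻_t, (∫⋯∫⁻_{i}, G ∂μ) ∂μ := by
    rw [Finset.insert_eq, lmarginal_union' μ G hG (Finset.disjoint_singleton_left.2 hi)]
  have hC : ∀ z, (∫⋯∫⁻_t, (fun z => C ^ q * Ψ z ^ (q / p)) ∂μ) z ^ (p / q)
      = C ^ p * (∫⋯∫⁻_t, (fun z => Ψ z ^ (q / p)) ∂μ) z ^ (p / q) := fun z => by
    rw [lmarginal_const_mul _ (hΨ.pow_const _), mul_rpow_of_nonneg _ _ hpq0, ← rpow_mul,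
      mul_div_cancel₀ _ hq.ne']
  have key : (∫⋯∫⁻_(insert i t)ᶜ,
        (fun z => (∫⋯∫⁻_(insert i t), G ∂μ) z ^ (p / q)) ∂μ) x
      ≤ C ^ p * (∫⋯∫⁻_tᶜ, (fun z => (∫⋯∫⁻_t, (fun w => F w ^ q) ∂μ) z ^ (p / q)) ∂μ) x :=
    calc _ ≤ (∫⋯∫⁻_(insert i t)ᶜ,
          (fun z => (∫⋯∫⁻_t, (fun z => C ^ q * Ψ z ^ (q / p)) ∂μ) z ^ (p / q)) ∂μ) x := by
          rw [hGu]
          exact lmarginal_rpow_lmarginal_le_of_ae (Θ := fun z => C ^ q * Ψ z ^ (q / p))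
            (hG.lmarginal μ) (measurable_const.mul (hΨ.pow_const _)) hi
            (lmarginal_update_of_mem μ (Finset.mem_singleton_self i) G)
            (fun z a => by simp only [hΨi])
            (ae_lmarginal_singleton_le hk hf hq hi hslice) hpq0 x
      _ = C ^ p * (∫⋯∫⁻_(insert i t)ᶜ,
          (fun z => (∫⋯∫⁻_t, (fun z => Ψ z ^ (q / p)) ∂μ) z ^ (p / q)) ∂μ) x := by
        simp only [hC]
        exact lmarginal_const_mul _ (((hΨ.pow_const _).lmarginal μ).pow_const _) x
      _ ≤ _ := mul_le_mul' le_rfl (lmarginal_rpow_lmarginal_rpow_singleton_le hF hi hp hpq x)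
  calc _ ≤ (C ^ p * _) ^ (1 / p) := rpow_le_rpow key (one_div_nonneg.2 hp.le)
    _ = _ := by
      rw [mul_rpow_of_nonneg _ _ (one_div_nonneg.2 hp.le), ← rpow_mul, mul_one_div_cancel hp.ne',
        rpow_one, mixedNorm]

end Step

section Iteration

variable {δ : Type*} [DecidableEq δ] [Fintype δ] {π : δ → Type*} [∀ i, MeasurableSpace (π i)]
  {μ : ∀ i, Measure (π i)} [∀ i, SigmaFinite (μ i)] [∀ i, NeZero (μ i)]
  {k : ∀ i, π i → π i → ℝ≥0∞} (hk : ∀ i, Measurable (uncurry (k i)))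
  {f : (∀ i, π i) → ℝ≥0∞} (hf : Measurable f) {W : (∀ i, π i) → ℝ≥0∞} (hW : Measurable W)
  {p q : ℝ} (hp : 0 < p) (hpq : p < q) {C : ℝ≥0∞}
  (hslice : ∀ i, ∀ᵐ x ∂Measure.pi μ, ∀ g : π i → ℝ≥0∞, Measurable g →
      (∫⁻ y, ((∫⁻ z, g z * k i y z ∂μ i) * W (update x i y)) ^ q ∂μ i) ^ (1 / q)
        ≤ C * (∫⁻ y, (g y * W (update x i y)) ^ p ∂μ i) ^ (1 / p))
include hk hf hW hp hpq hslice

theorem mixedNorm_partialKernelOp_le (t : Finset δ) (x : ∀ i, π i) :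
    mixedNorm μ p q t (fun z => partialKernelOp μ k t f z * W z) x
      ≤ C ^ t.card * mixedNorm μ p q ∅ (fun z => f z * W z) x := by
  induction t using Finset.induction_on with
  | empty => simp
  | insert i t hi ih =>
    calc _ ≤ C * mixedNorm μ p q t (fun z => partialKernelOp μ k t f z * W z) x :=
          mixedNorm_partialKernelOp_insert_le hk hf hW hp hpq hi (hslice i) x
      _ ≤ C * (C ^ t.card * mixedNorm μ p q ∅ (fun z => f z * W z) x) := by gcongr
      _ = _ := by rw [Finset.card_insert_of_notMem hi, pow_succ, mul_comm _ C, mul_assoc]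

theorem lintegral_rpow_piKernel_mul_le :
    (∫⁻ x, ((∫⁻ y, f y * ∏ i, k i (x i) (y i) ∂Measure.pi μ) * W x) ^ q ∂Measure.pi μ) ^ (1 / q)
      ≤ C ^ Fintype.card δ * (∫⁻ x, (f x * W x) ^ p ∂Measure.pi μ) ^ (1 / p) := by
  have x₀ : ∀ i, π i := fun i => (Measure.nonempty_of_neZero (μ i)).some
  have h := mixedNorm_partialKernelOp_le hk hf hW hp hpq hslice Finset.univ x₀
  rw [mixedNorm_univ hp.ne', mixedNorm_empty (hp.trans hpq).ne', Finset.card_univ] at h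
  simpa only [partialKernelOp_univ] using h

end Iteration

theorem one_weight_iteration_general
    (n : ℕ) (N : Fin n → ℕ) (α : Fin n → ℝ) (p q : ℝ) (hp : 1 < p) (hpq : p < q)
    (ω : (∀ i, EuclideanSpace ℝ (Fin (N i))) → ℝ) (hωm : Measurable ω) (C : ℝ) (hC : 0 < C)
    (hslice : ∀ i : Fin n,
      ∀ᵐ x : (∀ j, EuclideanSpace ℝ (Fin (N j))),
        ∀ f : EuclideanSpace ℝ (Fin (N i)) → ℝ≥0∞, Measurable f →
          (∫⁻ y : EuclideanSpace ℝ (Fin (N i)),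
              ((∫⁻ z, f z * ENNReal.ofReal (‖y - z‖ ^ (α i - (N i : ℝ)))) *
                ENNReal.ofReal (ω (Function.update x i y))) ^ q) ^ (1 / q)
            ≤ ENNReal.ofReal C *
              (∫⁻ y : EuclideanSpace ℝ (Fin (N i)),
                (f y * ENNReal.ofReal (ω (Function.update x i y))) ^ p) ^ (1 / p)) :
    ∃ C' : ℝ, 0 < C' ∧
      ∀ f : (∀ i, EuclideanSpace ℝ (Fin (N i))) → ℝ≥0∞, Measurable f →
        (∫⁻ x, ((∫⁻ y, f y *
              ∏ i, ENNReal.ofReal (‖x i - y i‖ ^ (α i - (N i : ℝ)))) *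
            ENNReal.ofReal (ω x)) ^ q) ^ (1 / q)
          ≤ ENNReal.ofReal C' *
            (∫⁻ x, (f x * ENNReal.ofReal (ω x)) ^ p) ^ (1 / p) := by
  refine ⟨C ^ n, pow_pos hC n, fun f hf => ?_⟩
  have hk : ∀ i, Measurable (uncurry fun a b : EuclideanSpace ℝ (Fin (N i)) =>
      ENNReal.ofReal (‖a - b‖ ^ (α i - (N i : ℝ)))) := fun i => by fun_prop
  simpa only [volume_pi, ENNReal.ofReal_pow hC.le, Fintype.card_fin] using
    lintegral_rpow_piKernel_mul_le hk hf hωm.ennreal_ofReal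
      (zero_lt_one.trans hp) hpq (C := ENNReal.ofReal C) hslice

/-- One-weight iteration (Section 6): if `α_i/N_i = 1/p - 1/q` for every `i` and the
one-parameter weighted inequality holds uniformly in each coordinate slice, then the
strong fractional integral satisfies the one-weight inequality on the product space. -/
theorem one_weight_iteration
    (n : ℕ) (hn : 1 ≤ n) (N : Fin n → ℕ) (hN : ∀ i, 1 ≤ N i)
    (α : Fin n → ℝ) (hα : ∀ i, 0 < α i) (hαN : ∀ i, α i < (N i : ℝ))
    (p q : ℝ) (hp : 1 < p) (hpq : p < q)
    (hbal : ∀ i, α i / (N i : ℝ) = 1 / p - 1 / q)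
    (ω : (∀ i, EuclideanSpace ℝ (Fin (N i))) → ℝ)
    (hωm : Measurable ω) (hωpos : ∀ x, 0 < ω x)
    (C : ℝ) (hC : 0 < C)
    (hslice : ∀ i : Fin n,
      ∀ᵐ x : (∀ j, EuclideanSpace ℝ (Fin (N j))),
        ∀ f : EuclideanSpace ℝ (Fin (N i)) → ℝ≥0∞, Measurable f →
          (∫⁻ y : EuclideanSpace ℝ (Fin (N i)),
              ((∫⁻ z, f z * ENNReal.ofReal (‖y - z‖ ^ (α i - (N i : ℝ)))) *
                ENNReal.ofReal (ω (Function.update x i y))) ^ q) ^ (1 / q)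
            ≤ ENNReal.ofReal C *
              (∫⁻ y : EuclideanSpace ℝ (Fin (N i)),
                (f y * ENNReal.ofReal (ω (Function.update x i y))) ^ p) ^ (1 / p)) :
    ∃ C' : ℝ, 0 < C' ∧
      ∀ f : (∀ i, EuclideanSpace ℝ (Fin (N i))) → ℝ≥0∞, Measurable f →
        (∫⁻ x, ((∫⁻ y, f y *
              ∏ i, ENNReal.ofReal (‖x i - y i‖ ^ (α i - (N i : ℝ)))) *
            ENNReal.ofReal (ω x)) ^ q) ^ (1 / q)
          ≤ ENNReal.ofReal C' *
            (∫⁻ x, (f x * ENNReal.ofReal (ω x)) ^ p) ^ (1 / p) :=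
  one_weight_iteration_general n N α p q hp hpq ω hωm C hC hslice
end
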